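/- For any simple graph G = (V, E) of order n, (−1)^{n−1} ∑_{u∈V} P(G − u, −1) ≥ (−1)^n P(G, −1), with equality if and only if G is complete. Equivalently, the number of acyclic orientations of G is at most the total number of acyclic orientations of G − u summed over all u ∈ V, with equality iff G is complete. -/

import Mathlib

/-!
By Stanley's theorem `(-1)ⁿ P(G, -1)` is the number `a(G)` of acyclic orientations of `G`:
both sides satisfy deletion–contraction, `P(G) = P(G - e) - P(G / e)` and
`a(G) = a(G - e) + a(G / e)`. For the latter, an acyclic orientation of `G - uv` extends to `G`
in one way, or in two ways exactly when `u` and `v` are incomparable, and those orientations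
are the acyclic orientations of `G / uv`.

The acyclic orientations of `G - u` are the acyclic orientations of `G` with `u` as a source,
so `∑ᵤ a(G - u)` counts pairs of an acyclic orientation and one of its sources. Every acyclic
orientation has a source; in a complete graph it is unique, while two nonadjacent vertices
can both be made sources.
-/

open Polynomial

/-- `P` is the chromatic polynomial of `G`: for every natural number `k`,
`P` evaluated at `k` equals the number of proper `k`-colorings of `G`. -/
def IsChromPoly {W : Type*} (G : SimpleGraph W) (P : Polynomial ℝ) : Prop :=
  ∀ k : ℕ, P.eval (k : ℝ) = (Nat.card (G.Coloring (Fin k)) : ℝ)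

open Relation

lemma Nat.card_subtype_add_card_subtype {α : Type*} [Finite α] {p q : α → Prop}
    (h : ∀ a, p a ∨ q a) :
    Nat.card {a // p a} + Nat.card {a // q a} = Nat.card α + Nat.card {a // p a ∧ q a} := by
  have := Set.ncard_union_add_ncard_inter {a | p a} {a | q a}
  rw [show {a | p a} ∪ {a | q a} = Set.univ from Set.eq_univ_of_forall h, Set.ncard_univ] at this
  exact this.symm

namespace Relation

variable {V : Type*} {r : V → V → Prop} {u v x y : V}

lemma transGen_or_eq_and_eq (h : TransGen (fun a b => r a b ∨ (a = u ∧ b = v)) x y) :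
    TransGen r x y ∨ (ReflTransGen r x u ∧ ReflTransGen r v y) := by
  induction h with
  | single h =>
    rcases h with h | ⟨rfl, rfl⟩
    · exact .inl (.single h)
    · exact .inr ⟨.refl, .refl⟩
  | tail _ h ih =>
    rcases h with h | ⟨rfl, rfl⟩
    · rcases ih with ih | ⟨h1, h2⟩
      · exact .inl (ih.tail h)
      · exact .inr ⟨h1, h2.tail h⟩
    · rcases ih with ih | ⟨h1, -⟩
      · exact .inr ⟨ih.to_reflTransGen, .refl⟩
      · exact .inr ⟨h1, .refl⟩

/-- Paths in `r` with `v` merged into `u`, for incomparable `u` and `v`. -/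
lemma transGen_merge (hr : ∀ a, ¬ TransGen r a a)
    (huv : ¬ ReflTransGen r u v) (hvu : ¬ ReflTransGen r v u)
    (h : TransGen (fun a b => r a b ∨ (b = u ∧ r a v) ∨ (a = u ∧ r v b)) x y) :
    TransGen r x y ∨ (ReflTransGen r x u ∧ ReflTransGen r v y) ∨
      (ReflTransGen r x v ∧ ReflTransGen r u y) := by
  induction h with
  | single h =>
    rcases h with h | ⟨rfl, h⟩ | ⟨rfl, h⟩
    · exact .inl (.single h)
    · exact .inr (.inr ⟨.single h, .refl⟩)
    · exact .inr (.inl ⟨.refl, .single h⟩)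
  | tail _ h ih =>
    rcases h with h | ⟨rfl, h⟩ | ⟨rfl, h⟩
    · rcases ih with ih | ⟨hx, hy⟩ | ⟨hx, hy⟩
      · exact .inl (ih.tail h)
      · exact .inr (.inl ⟨hx, hy.tail h⟩)
      · exact .inr (.inr ⟨hx, hy.tail h⟩)
    · rcases ih with ih | ⟨-, hy⟩ | ⟨-, hy⟩
      · exact .inr (.inr ⟨(ih.tail h).to_reflTransGen, .refl⟩)
      · exact absurd (TransGen.tail' hy h) (hr v)
      · exact absurd (hy.tail h) huv
    · rcases ih with ih | ⟨-, hy⟩ | ⟨hx, -⟩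
      · exact .inr (.inl ⟨ih.to_reflTransGen, .single h⟩)
      · exact absurd hy hvu
      · exact .inl (TransGen.tail' hx h)

lemma transGen_subtype {p : V → Prop} (hp : ∀ ⦃a b⦄, r a b → p b) (h : TransGen r x y)
    (hx : p x) (hy : p y) : TransGen (fun a b : Subtype p => r a b) ⟨x, hx⟩ ⟨y, hy⟩ := by
  induction h using TransGen.head_induction_on with
  | single h => exact .single h
  | head hac _ ih => exact .head hac (ih (hp hac))

end Relation

namespace SimpleGraph

variable {V : Type*} {G : SimpleGraph V}

-- `acyclic` also rules out orienting an edge both ways (`AcyclicOrientation.asymm`).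
@[ext]
structure AcyclicOrientation (G : SimpleGraph V) where
  rel : V → V → Prop
  adj_of_rel ⦃a b : V⦄ : rel a b → G.Adj a b
  rel_or_rel ⦃a b : V⦄ : G.Adj a b → rel a b ∨ rel b a
  acyclic (a : V) : ¬ TransGen rel a a

namespace AcyclicOrientation

instance [Finite V] : Finite G.AcyclicOrientation :=
  Finite.of_injective rel fun _ _ => AcyclicOrientation.ext

instance : Unique (⊥ : SimpleGraph V).AcyclicOrientation where
  default := ⟨fun _ _ => False, fun _ _ => False.elim, fun _ _ h => h.elim, fun _ h => by
    obtain ⟨_, h, -⟩ := TransGen.head'_iff.1 h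
    exact h⟩
  uniq o := by
    ext a b
    exact iff_of_false (fun h => o.adj_of_rel h) id

variable (o : G.AcyclicOrientation) {a b : V}

lemma irrefl (a : V) : ¬ o.rel a a := fun h => o.acyclic a (.single h)

lemma asymm (h : o.rel a b) : ¬ o.rel b a := fun h' => o.acyclic a (.tail (.single h) h')

lemma rel_of_not_rel (hab : G.Adj a b) (h : ¬ o.rel b a) : o.rel a b :=
  (o.rel_or_rel hab).resolve_right h

lemma not_reflTransGen_of_rel (h : o.rel a b) : ¬ ReflTransGen o.rel b a :=
  fun h' => o.acyclic a (.head' h h')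

lemma not_reflTransGen_or_not_reflTransGen (hab : a ≠ b) :
    ¬ ReflTransGen o.rel a b ∨ ¬ ReflTransGen o.rel b a := by
  by_contra! h
  exact o.acyclic a (TransGen.trans_left
    ((reflTransGen_iff_eq_or_transGen.1 h.1).resolve_left hab.symm) h.2)

def comap {W : Type*} {H : SimpleGraph W} (f : H →g G) : H.AcyclicOrientation where
  rel a b := H.Adj a b ∧ o.rel (f a) (f b)
  adj_of_rel _ _ h := h.1
  rel_or_rel _ _ h := (o.rel_or_rel (f.map_adj h)).imp (⟨h, ·⟩) (⟨h.symm, ·⟩)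
  acyclic a h := o.acyclic (f a) (TransGen.lift f (fun _ _ h => h.2) _ _ h)

lemma not_reflTransGen_comap {W : Type*} {H : SimpleGraph W} (f : H →g G) {x y : W}
    (hxy : x ≠ y) (hf : f x = f y) : ¬ ReflTransGen (o.comap f).rel x y := fun h => by
  have : TransGen o.rel (f x) (f y) := TransGen.lift f (fun _ _ h => h.2) _ _
    ((reflTransGen_iff_eq_or_transGen.1 h).resolve_left hxy.symm)
  exact o.acyclic (f x) (hf ▸ this)

def IsSource (u : V) : Prop := ∀ x, ¬ o.rel x u

lemma exists_isSource [Finite V] [Nonempty V] : ∃ u, o.IsSource u := by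
  have : IsTrans V (TransGen o.rel) := ⟨fun _ _ _ => TransGen.trans⟩
  have : Std.Irrefl (TransGen o.rel) := ⟨o.acyclic⟩
  obtain ⟨u, -, hu⟩ := (Finite.wellFounded_of_trans_of_irrefl (TransGen o.rel)).has_min
    Set.univ Set.univ_nonempty
  exact ⟨u, fun x hx => hu x trivial (.single hx)⟩

lemma isSource_subsingleton (hG : G = ⊤) {u w : V} (hu : o.IsSource u) (hw : o.IsSource w) :
    u = w := by
  by_contra hne
  rcases o.rel_or_rel (show G.Adj u w from hG ▸ hne) with h | h
  exacts [hw u h, hu w h]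

end AcyclicOrientation

def acyclicOrientationOfPotential (f : V → ℕ) (hf : ∀ ⦃a b⦄, G.Adj a b → f a ≠ f b) :
    G.AcyclicOrientation where
  rel a b := G.Adj a b ∧ f a < f b
  adj_of_rel _ _ h := h.1
  rel_or_rel a b hab := (lt_or_gt_of_ne (hf hab)).imp (⟨hab, ·⟩) (⟨hab.symm, ·⟩)
  acyclic a h := by
    have := TransGen.lift f (p := (· < ·)) (fun _ _ h => h.2) _ _ h
    rw [transGen_eq_self] at this
    exact lt_irrefl _ this

lemma exists_two_sources_of_ne_top [Finite V] (hG : G ≠ ⊤) :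
    ∃ (o : G.AcyclicOrientation) (u w : V), u ≠ w ∧ o.IsSource u ∧ o.IsSource w := by
  obtain ⟨u, w, huw, hadj⟩ : ∃ u w, u ≠ w ∧ ¬ G.Adj u w := by
    by_contra! h
    exact hG (eq_top_iff.2 fun x y hxy => h x y hxy)
  obtain ⟨e, he⟩ := Countable.exists_injective_nat V
  classical
  let f : V → ℕ := fun x => if x = u ∨ x = w then 0 else e x + 1
  have hf : ∀ ⦃a b⦄, G.Adj a b → f a ≠ f b := by
    intro a b hab
    simp only [f]
    split_ifs with ha hb hb
    · rcases ha with rfl | rfl <;> rcases hb with rfl | rfl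
      exacts [absurd rfl hab.ne, absurd hab hadj, absurd hab.symm hadj, absurd rfl hab.ne]
    · exact (Nat.succ_ne_zero _).symm
    · exact Nat.succ_ne_zero _
    · simpa [he.eq_iff] using hab.ne
  refine ⟨acyclicOrientationOfPotential f hf, u, w, huw, ?_, ?_⟩ <;>
    intro x hx <;> simp [acyclicOrientationOfPotential, f] at hx

namespace AcyclicOrientation

-- For `a = u` the inner condition is vacuous: every edge at `u` points away from `u`.
def extendBySource {u : V} (o : (G.induce {w | w ≠ u}).AcyclicOrientation) :
    G.AcyclicOrientation where
  rel a b := G.Adj a b ∧ ∃ hb : b ≠ u, ∀ ha : a ≠ u, o.rel ⟨a, ha⟩ ⟨b, hb⟩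
  adj_of_rel _ _ h := h.1
  rel_or_rel a b hab := by
    by_cases ha : a = u
    · exact .inl ⟨hab, ha ▸ hab.ne', fun h => absurd ha h⟩
    by_cases hb : b = u
    · exact .inr ⟨hab.symm, ha, fun h => absurd hb h⟩
    exact (o.rel_or_rel (a := ⟨a, ha⟩) (b := ⟨b, hb⟩) hab).imp
      (fun h => ⟨hab, hb, fun _ => h⟩) (fun h => ⟨hab.symm, ha, fun _ => h⟩)
  acyclic a h := by
    obtain ⟨c, -, hc⟩ := TransGen.tail'_iff.1 h
    have hlift := transGen_subtype (p := (· ≠ u)) (fun _ _ h => h.2.1) h hc.2.1 hc.2.1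
    exact o.acyclic _ (TransGen.mono (fun x y h => h.2.2 x.2) _ _ hlift)

def induceEquivIsSource (u : V) :
    (G.induce {w | w ≠ u}).AcyclicOrientation ≃ {o : G.AcyclicOrientation // o.IsSource u} where
  toFun o := ⟨extendBySource o, fun _ h => h.2.1 rfl⟩
  invFun o := o.1.comap (Embedding.induce _).toHom
  left_inv o := by
    ext a b
    exact ⟨fun h => h.2.2.2 a.2, fun h => ⟨o.adj_of_rel h, o.adj_of_rel h, b.2, fun _ => h⟩⟩
  right_inv o := by
    ext a b
    refine ⟨fun ⟨hab, hb, h⟩ => ?_, fun h =>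
      ⟨o.1.adj_of_rel h, fun hb => o.2 a (hb ▸ h), fun ha => ⟨o.1.adj_of_rel h, h⟩⟩⟩
    by_cases ha : a = u
    · exact o.1.rel_of_not_rel hab (ha ▸ o.2 b)
    · exact (h ha).2

lemma card_sigma_isSource [Fintype V] :
    Nat.card (Σ o : G.AcyclicOrientation, {u // o.IsSource u}) =
      ∑ u, Nat.card (G.induce {w | w ≠ u}).AcyclicOrientation := by
  let swap : (Σ o : G.AcyclicOrientation, {u // o.IsSource u}) ≃
      Σ u, {o : G.AcyclicOrientation // o.IsSource u} :=
    { toFun p := ⟨p.2, p.1, p.2.2⟩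
      invFun p := ⟨p.2, p.1, p.2.2⟩
      left_inv _ := rfl
      right_inv _ := rfl }
  rw [← Nat.card_sigma]
  exact Nat.card_congr (swap.trans (.sigmaCongrRight fun u => (induceEquivIsSource u).symm))

variable [Finite V] [Nonempty V]

lemma one_le_card_isSource (o : G.AcyclicOrientation) : 1 ≤ Nat.card {u // o.IsSource u} :=
  have ⟨u, hu⟩ := o.exists_isSource
  have : Nonempty {u // o.IsSource u} := ⟨⟨u, hu⟩⟩
  Nat.card_pos

lemma card_le_card_sigma_isSource :
    Nat.card G.AcyclicOrientation ≤
      Nat.card (Σ o : G.AcyclicOrientation, {u // o.IsSource u}) := by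
  have := Fintype.ofFinite G.AcyclicOrientation
  rw [Nat.card_sigma, Nat.card_eq_fintype_card, Fintype.card_eq_sum_ones]
  exact Finset.sum_le_sum fun o _ => o.one_le_card_isSource

lemma card_eq_card_sigma_isSource_iff :
    Nat.card G.AcyclicOrientation =
      Nat.card (Σ o : G.AcyclicOrientation, {u // o.IsSource u}) ↔ G = ⊤ := by
  have := Fintype.ofFinite G.AcyclicOrientation
  rw [Nat.card_sigma, Nat.card_eq_fintype_card, Fintype.card_eq_sum_ones,
    Finset.sum_eq_sum_iff_of_le fun o _ => o.one_le_card_isSource]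
  simp only [Finset.mem_univ, true_implies, eq_comm (a := 1), Nat.card_eq_one_iff_unique]
  constructor
  · intro h
    by_contra hG
    obtain ⟨o, u, w, huw, hu, hw⟩ := exists_two_sources_of_ne_top hG
    have := (h o).1
    have : (⟨u, hu⟩ : {u // o.IsSource u}) = ⟨w, hw⟩ := Subsingleton.elim _ _
    exact huw (congrArg Subtype.val this)
  · rintro hG o
    obtain ⟨u, hu⟩ := o.exists_isSource
    exact ⟨⟨fun a b => Subtype.ext (o.isSource_subsingleton hG a.2 b.2)⟩, ⟨⟨u, hu⟩⟩⟩

end AcyclicOrientation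

theorem card_acyclicOrientation_le_sum_card_induce [Fintype V] [Nonempty V] :
    Nat.card G.AcyclicOrientation ≤ ∑ u, Nat.card (G.induce {w | w ≠ u}).AcyclicOrientation :=
  AcyclicOrientation.card_sigma_isSource (G := G) ▸
    AcyclicOrientation.card_le_card_sigma_isSource

theorem card_acyclicOrientation_eq_sum_card_induce_iff [Fintype V] [Nonempty V] :
    Nat.card G.AcyclicOrientation = ∑ u, Nat.card (G.induce {w | w ≠ u}).AcyclicOrientation ↔
      G = ⊤ :=
  AcyclicOrientation.card_sigma_isSource (G := G) ▸
    AcyclicOrientation.card_eq_card_sigma_isSource_iff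

variable {u v : V}

open scoped Classical in
noncomputable def mergeVertex (h : u ≠ v) (w : V) : {x // x ≠ v} :=
  if hw : w = v then ⟨u, h⟩ else ⟨w, hw⟩

section mergeVertex

variable (h : u ≠ v)

lemma mergeVertex_of_ne {w : V} (hw : w ≠ v) : mergeVertex h w = ⟨w, hw⟩ := dif_neg hw

lemma mergeVertex_right : mergeVertex h v = ⟨u, h⟩ := dif_pos rfl

lemma mergeVertex_left_eq_right : mergeVertex h u = mergeVertex h v := by
  rw [mergeVertex_of_ne h h, mergeVertex_right]

lemma mergeVertex_val (a : {x // x ≠ v}) : mergeVertex h a.1 = a := mergeVertex_of_ne h a.2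

lemma apply_mergeVertex_val {α : Type*} {c : V → α} (hc : c u = c v) (w : V) :
    c (mergeVertex h w).1 = c w := by
  by_cases hw : w = v
  · rw [hw, mergeVertex_right, hc]
  · rw [mergeVertex_of_ne h hw]

lemma mergeVertex_eq_mergeVertex_iff {x y : V} (hxy : x ≠ y) :
    mergeVertex h x = mergeVertex h y ↔ s(x, y) = s(u, v) := by
  by_cases hx : x = v <;> by_cases hy : y = v <;>
    simp_all [mergeVertex_of_ne, mergeVertex_right]
  exact eq_comm

lemma deleteEdges_adj_iff_mergeVertex_ne {x y : V} (hxy : G.Adj x y) :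
    (G.deleteEdges {s(u, v)}).Adj x y ↔ mergeVertex h x ≠ mergeVertex h y := by
  rw [deleteEdges_adj, Ne, mergeVertex_eq_mergeVertex_iff h hxy.ne]
  simp [hxy]

end mergeVertex

/-- The contraction `G / uv`, on the vertex set `V - v` with `u` standing for the merged
vertex. -/
noncomputable def contractEdge (G : SimpleGraph V) (h : u ≠ v) : SimpleGraph {x // x ≠ v} :=
  fromRel (Relation.Map G.Adj (mergeVertex h) (mergeVertex h))

section contractEdge

variable (h : u ≠ v)

lemma contractEdge_adj {a b : {x // x ≠ v}} :
    (G.contractEdge h).Adj a b ↔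
      a ≠ b ∧ ∃ x y, G.Adj x y ∧ mergeVertex h x = a ∧ mergeVertex h y = b := by
  rw [contractEdge, fromRel_adj]
  refine and_congr_right fun _ => ⟨?_, .inl⟩
  rintro (hab | ⟨x, y, hxy, rfl, rfl⟩)
  exacts [hab, ⟨y, x, hxy.symm, rfl, rfl⟩]

lemma contractEdge_adj_mergeVertex {x y : V} (hxy : (G.deleteEdges {s(u, v)}).Adj x y) :
    (G.contractEdge h).Adj (mergeVertex h x) (mergeVertex h y) :=
  (contractEdge_adj h).2
    ⟨(deleteEdges_adj_iff_mergeVertex_ne h hxy.1).1 hxy, x, y, hxy.1, rfl, rfl⟩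

lemma exists_deleteEdges_adj_of_contractEdge_adj {a b : {x // x ≠ v}}
    (hab : (G.contractEdge h).Adj a b) :
    ∃ x y, (G.deleteEdges {s(u, v)}).Adj x y ∧ mergeVertex h x = a ∧ mergeVertex h y = b := by
  obtain ⟨hne, x, y, hxy, rfl, rfl⟩ := (contractEdge_adj h).1 hab
  exact ⟨x, y, (deleteEdges_adj_iff_mergeVertex_ne h hxy).2 hne, rfl, rfl⟩

noncomputable def contractEdgeHom : G.deleteEdges {s(u, v)} →g G.contractEdge h :=
  ⟨mergeVertex h, contractEdge_adj_mergeVertex h⟩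

end contractEdge

section deleteContract

variable (huv : G.Adj u v)

def coloringEquivDeleteEdge (α : Type*) :
    G.Coloring α ≃ {c : (G.deleteEdges {s(u, v)}).Coloring α // c u ≠ c v} where
  toFun c := ⟨Coloring.mk c fun hab => c.valid (deleteEdges_le _ hab), c.valid huv⟩
  invFun c := Coloring.mk c.1 fun {a b} hab => by
    by_cases he : s(a, b) = s(u, v)
    · rcases Sym2.eq_iff.1 he with ⟨rfl, rfl⟩ | ⟨rfl, rfl⟩
      exacts [c.2, c.2.symm]
    · exact c.1.valid (by simp [hab, he])
  left_inv _ := rfl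
  right_inv _ := rfl

noncomputable def coloringEquivContractEdge (α : Type*) :
    (G.contractEdge huv.ne).Coloring α ≃
      {c : (G.deleteEdges {s(u, v)}).Coloring α // c u = c v} where
  toFun c := ⟨c.comp (contractEdgeHom huv.ne), congrArg c (mergeVertex_left_eq_right huv.ne)⟩
  invFun c := Coloring.mk (fun a => c.1 a.1) fun hab => by
    obtain ⟨x, y, hxy, rfl, rfl⟩ := exists_deleteEdges_adj_of_contractEdge_adj huv.ne hab
    simpa only [apply_mergeVertex_val huv.ne c.2] using c.1.valid hxy
  left_inv c := by
    ext a
    exact congrArg c (mergeVertex_val huv.ne a)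
  right_inv c := by
    ext x
    exact apply_mergeVertex_val huv.ne c.2 x

lemma card_coloring_deleteEdge [Finite V] (α : Type*) [Finite α] :
    Nat.card ((G.deleteEdges {s(u, v)}).Coloring α) =
      Nat.card (G.Coloring α) + Nat.card ((G.contractEdge huv.ne).Coloring α) := by
  classical
  rw [Nat.card_congr (coloringEquivDeleteEdge huv α),
    Nat.card_congr (coloringEquivContractEdge huv α), ← Nat.card_sum]
  exact Nat.card_congr ((Equiv.sumCompl fun c => c u ≠ c v).symm.trans
    (.sumCongr (.refl _) (.subtypeEquivRight fun _ => not_not)))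

namespace AcyclicOrientation

def addArrow (o : (G.deleteEdges {s(u, v)}).AcyclicOrientation)
    (ho : ¬ ReflTransGen o.rel v u) : G.AcyclicOrientation where
  rel a b := o.rel a b ∨ (a = u ∧ b = v)
  adj_of_rel := by
    rintro a b (h | ⟨rfl, rfl⟩)
    exacts [deleteEdges_le _ (o.adj_of_rel h), huv]
  rel_or_rel a b hab := by
    by_cases he : s(a, b) = s(u, v)
    · rcases Sym2.eq_iff.1 he with ⟨rfl, rfl⟩ | ⟨rfl, rfl⟩
      exacts [.inl (.inr ⟨rfl, rfl⟩), .inr (.inr ⟨rfl, rfl⟩)]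
    · exact (o.rel_or_rel (by simp [hab, he])).imp .inl .inl
  acyclic a h := by
    rcases transGen_or_eq_and_eq h with h | ⟨hau, hva⟩
    exacts [o.acyclic a h, ho (hva.trans hau)]

def relEquivDeleteEdge :
    {o : G.AcyclicOrientation // o.rel u v} ≃
      {o : (G.deleteEdges {s(u, v)}).AcyclicOrientation // ¬ ReflTransGen o.rel v u} where
  toFun o := ⟨o.1.comap (Hom.ofLE (deleteEdges_le _)), fun h =>
    o.1.not_reflTransGen_of_rel o.2 (ReflTransGen.mono (fun _ _ h => h.2) _ _ h)⟩
  invFun o := ⟨addArrow huv o.1 o.2, .inr ⟨rfl, rfl⟩⟩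
  left_inv o := by
    ext a b
    refine ⟨?_, fun h => ?_⟩
    · rintro (h | ⟨rfl, rfl⟩)
      exacts [h.2, o.2]
    by_cases he : s(a, b) = s(u, v)
    · rcases Sym2.eq_iff.1 he with ⟨rfl, rfl⟩ | ⟨rfl, rfl⟩
      exacts [.inr ⟨rfl, rfl⟩, absurd h (o.1.asymm o.2)]
    · exact .inl ⟨by simp [o.1.adj_of_rel h, he], h⟩
  right_inv o := by
    ext a b
    refine ⟨fun ⟨hab, h⟩ => h.resolve_right fun ⟨ha, hb⟩ => ?_,
      fun h => ⟨o.1.adj_of_rel h, .inl h⟩⟩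
    simp [show a = u from ha, show b = v from hb] at hab

variable {o : (G.deleteEdges {s(u, v)}).AcyclicOrientation}

lemma acyclic_map_mergeVertex (huv' : ¬ ReflTransGen o.rel u v)
    (hvu : ¬ ReflTransGen o.rel v u) (a : {x // x ≠ v}) :
    ¬ TransGen (Relation.Map o.rel (mergeVertex huv.ne) (mergeVertex huv.ne)) a a := by
  intro h
  have hmerge : Relation.Map o.rel (mergeVertex huv.ne) (mergeVertex huv.ne) ≤ Function.onFun
      (fun x y => o.rel x y ∨ (y = u ∧ o.rel x v) ∨ (x = u ∧ o.rel v y)) Subtype.val := by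
    rintro _ _ ⟨x, y, hxy, rfl, rfl⟩
    by_cases hx : x = v <;> by_cases hy : y = v
    · rw [hx, hy] at hxy
      exact absurd hxy (o.irrefl v)
    · rw [hx] at hxy
      rw [hx, mergeVertex_right, mergeVertex_of_ne huv.ne hy]
      exact .inr (.inr ⟨rfl, hxy⟩)
    · rw [hy] at hxy
      rw [hy, mergeVertex_right, mergeVertex_of_ne huv.ne hx]
      exact .inr (.inl ⟨rfl, hxy⟩)
    · rw [mergeVertex_of_ne huv.ne hx, mergeVertex_of_ne huv.ne hy]
      exact .inl hxy
  rcases transGen_merge o.acyclic huv' hvu (TransGen.lift _ hmerge _ _ h) with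
    h | ⟨hau, hva⟩ | ⟨hav, hua⟩
  exacts [o.acyclic _ h, hvu (hva.trans hau), huv' (hua.trans hav)]

noncomputable def contractEdge (huv' : ¬ ReflTransGen o.rel u v)
    (hvu : ¬ ReflTransGen o.rel v u) : (G.contractEdge huv.ne).AcyclicOrientation where
  rel := Relation.Map o.rel (mergeVertex huv.ne) (mergeVertex huv.ne)
  adj_of_rel a b := by
    rintro ⟨x, y, hxy, rfl, rfl⟩
    refine (SimpleGraph.contractEdge_adj huv.ne).2 ⟨fun he => ?_, x, y,
      deleteEdges_le _ (o.adj_of_rel hxy), rfl, rfl⟩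
    exact acyclic_map_mergeVertex huv huv' hvu _ (.single ⟨x, y, hxy, rfl, he.symm⟩)
  rel_or_rel a b hab := by
    obtain ⟨x, y, hxy, rfl, rfl⟩ := exists_deleteEdges_adj_of_contractEdge_adj huv.ne hab
    exact (o.rel_or_rel hxy).imp (⟨x, y, ·, rfl, rfl⟩) (⟨y, x, ·, rfl, rfl⟩)
  acyclic := acyclic_map_mergeVertex huv huv' hvu

noncomputable def incomparableEquivContractEdge :
    {o : (G.deleteEdges {s(u, v)}).AcyclicOrientation //
        ¬ ReflTransGen o.rel u v ∧ ¬ ReflTransGen o.rel v u} ≃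
      (G.contractEdge huv.ne).AcyclicOrientation where
  toFun o := o.1.contractEdge huv o.2.1 o.2.2
  invFun o := ⟨o.comap (contractEdgeHom huv.ne),
    o.not_reflTransGen_comap _ huv.ne (mergeVertex_left_eq_right _),
    o.not_reflTransGen_comap _ huv.ne.symm (mergeVertex_left_eq_right _).symm⟩
  left_inv o := by
    ext x y
    refine ⟨fun ⟨hxy, h⟩ => ?_, fun h => ⟨o.1.adj_of_rel h, x, y, h, rfl, rfl⟩⟩
    by_contra hn
    exact acyclic_map_mergeVertex huv o.2.1 o.2.2 _
      (.tail (.single h) ⟨y, x, o.1.rel_of_not_rel hxy.symm hn, rfl, rfl⟩)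
  right_inv o := by
    ext a b
    refine ⟨fun ⟨x, y, ⟨_, h⟩, hx, hy⟩ => hx ▸ hy ▸ h, fun h => ?_⟩
    obtain ⟨x, y, hxy, rfl, rfl⟩ := exists_deleteEdges_adj_of_contractEdge_adj huv.ne
      (o.adj_of_rel h)
    exact ⟨x, y, ⟨hxy, h⟩, rfl, rfl⟩

theorem card_eq_card_deleteEdge_add_card_contractEdge [Finite V] :
    Nat.card G.AcyclicOrientation = Nat.card (G.deleteEdges {s(u, v)}).AcyclicOrientation +
      Nat.card (G.contractEdge huv.ne).AcyclicOrientation := by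
  have h0 : Nat.card {o : G.AcyclicOrientation // o.rel u v ∧ o.rel v u} = 0 :=
    have : IsEmpty {o : G.AcyclicOrientation // o.rel u v ∧ o.rel v u} :=
      ⟨fun o => o.1.asymm o.2.1 o.2.2⟩
    Nat.card_of_isEmpty
  have hG := Nat.card_subtype_add_card_subtype fun o : G.AcyclicOrientation => o.rel_or_rel huv
  have hH := Nat.card_subtype_add_card_subtype
    fun o : (G.deleteEdges {s(u, v)}).AcyclicOrientation =>
      o.not_reflTransGen_or_not_reflTransGen huv.ne
  have huv' := Nat.card_congr (relEquivDeleteEdge huv)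
  have hvu := Nat.card_congr (relEquivDeleteEdge huv.symm)
  rw [Sym2.eq_swap] at hvu
  have hC := Nat.card_congr (incomparableEquivContractEdge huv)
  omega

end AcyclicOrientation

lemma isChromPoly_of_deleteEdge_of_contractEdge [Finite V] {PH PC : ℝ[X]}
    (hH : IsChromPoly (G.deleteEdges {s(u, v)}) PH) (hC : IsChromPoly (G.contractEdge huv.ne) PC) :
    IsChromPoly G (PH - PC) := by
  intro k
  rw [eval_sub, hH, hC, card_coloring_deleteEdge huv]
  push_cast
  ring

end deleteContract

lemma isChromPoly_bot [Finite V] : IsChromPoly (⊥ : SimpleGraph V) (X ^ Nat.card V) := by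
  intro k
  let e : (⊥ : SimpleGraph V).Coloring (Fin k) ≃ (V → Fin k) :=
    ⟨fun c => c, fun f => Coloring.mk f fun h => h.elim, fun _ => rfl, fun _ => rfl⟩
  simp [Nat.card_congr e, Nat.card_fun]

lemma card_subtype_ne_add_one [Finite V] (v : V) : Nat.card {x // x ≠ v} + 1 = Nat.card V := by
  classical
  rw [← Finite.card_option]
  exact Nat.card_congr (Equiv.optionSubtypeNe v)

theorem exists_isChromPoly_neg_one_pow_mul_eval_neg_one {V : Type*} [Finite V]
    (G : SimpleGraph V) :
    ∃ P, IsChromPoly G P ∧ (-1) ^ Nat.card V * P.eval (-1) = Nat.card G.AcyclicOrientation := by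
  induction hn : Nat.card V using Nat.strong_induction_on generalizing V with | _ n ihn =>
  induction hm : G.edgeSet.ncard generalizing G with
  | zero =>
    rw [Set.ncard_eq_zero, edgeSet_eq_empty] at hm
    subst hm
    refine ⟨X ^ Nat.card V, isChromPoly_bot, ?_⟩
    rw [Nat.card_unique (α := (⊥ : SimpleGraph V).AcyclicOrientation), eval_pow, eval_X,
      hn, ← mul_pow]
    norm_num
  | succ m ihm =>
    obtain ⟨e, he⟩ := Set.nonempty_of_ncard_ne_zero (by omega : G.edgeSet.ncard ≠ 0)
    induction e using Sym2.ind with | _ u v =>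
    have huv : G.Adj u v := G.mem_edgeSet.1 he
    obtain ⟨PH, hPH, hH⟩ := ihm (G.deleteEdges {s(u, v)}) (by
      rw [edgeSet_deleteEdges, Set.ncard_sdiff_singleton_of_mem he, hm, Nat.add_sub_cancel])
    have hcard := card_subtype_ne_add_one v
    obtain ⟨PC, hPC, hC⟩ := ihn _ (by omega) (G.contractEdge huv.ne) rfl
    refine ⟨PH - PC, isChromPoly_of_deleteEdge_of_contractEdge huv hPH hPC, ?_⟩
    rw [AcyclicOrientation.card_eq_card_deleteEdge_add_card_contractEdge huv, Nat.cast_add, ← hH,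
      ← hC, ← hn, ← hcard, eval_sub]
    ring

end SimpleGraph

lemma IsChromPoly.unique {V : Type*} {G : SimpleGraph V} {P Q : ℝ[X]} (hP : IsChromPoly G P)
    (hQ : IsChromPoly G Q) : P = Q :=
  eq_of_infinite_eval_eq P Q <| Set.infinite_of_injective_forall_mem Nat.cast_injective
    fun k => by simp [hP k, hQ k]

theorem IsChromPoly.neg_one_pow_mul_eval_neg_one {V : Type*} [Finite V] {G : SimpleGraph V}
    {P : ℝ[X]} (hP : IsChromPoly G P) :
    (-1) ^ Nat.card V * P.eval (-1) = Nat.card G.AcyclicOrientation := by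
  obtain ⟨Q, hQ, h⟩ := G.exists_isChromPoly_neg_one_pow_mul_eval_neg_one
  rwa [hP.unique hQ]

theorem stmt17 {V : Type*} [Fintype V] [Nonempty V] (G : SimpleGraph V)
    (P : Polynomial ℝ) (Pu : V → Polynomial ℝ) (hP : IsChromPoly G P)
    (hPu : ∀ u : V, IsChromPoly (G.induce {v | v ≠ u}) (Pu u)) :
    (-1 : ℝ) ^ (Fintype.card V + 1) * ∑ u : V, (Pu u).eval (-1) ≥
      (-1 : ℝ) ^ (Fintype.card V) * P.eval (-1) ∧
    ((-1 : ℝ) ^ (Fintype.card V + 1) * ∑ u : V, (Pu u).eval (-1) =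
      (-1 : ℝ) ^ (Fintype.card V) * P.eval (-1) ↔ G = ⊤) := by
  have hG : (-1 : ℝ) ^ Fintype.card V * P.eval (-1) = Nat.card G.AcyclicOrientation := by
    rw [Fintype.card_eq_nat_card]
    exact hP.neg_one_pow_mul_eval_neg_one
  have hGu : (-1 : ℝ) ^ (Fintype.card V + 1) * ∑ u, (Pu u).eval (-1) =
      ∑ u, Nat.card (G.induce {w | w ≠ u}).AcyclicOrientation := by
    rw [Finset.mul_sum, Nat.cast_sum]
    refine Finset.sum_congr rfl fun u _ => ?_
    have hcard : Nat.card {w | w ≠ u} + 1 = Fintype.card V :=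
      Fintype.card_eq_nat_card (α := V) ▸ SimpleGraph.card_subtype_ne_add_one u
    rw [← (hPu u).neg_one_pow_mul_eval_neg_one, ← hcard]
    ring
  rw [hG, hGu, ge_iff_le]
  norm_cast
  exact ⟨G.card_acyclicOrientation_le_sum_card_induce,
    eq_comm.trans G.card_acyclicOrientation_eq_sum_card_induce_iff⟩
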